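/- arXiv:2304.01380 — 2 statements merged into one kernel-verified Lean document; each statement's English description precedes it below -/
import Mathlib

section
/- Let G be a Lie group (or more generally a topological group with a right-invariant metric d) and Λ < G a subgroup with κ(Λ) := inf{d(e, g) : g ∈ Λ, g ≠ e} > 0. For g₀ ∈ G there exists a neighborhood U of g₀ such that for all h ∈ U, κ(hΛh⁻¹) > κ(g₀Λg₀⁻¹)/3, provided conjugation maps (g, p) ↦ g p g⁻¹ are locally Lipschitz in g uniformly on compact sets of p. -/
/-!
If `u = h g₀⁻¹`, then `hΛh⁻¹ = u (g₀Λg₀⁻¹) u⁻¹`, and for a right-invariant metric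
`d(1, u x u⁻¹) = d(u, u x) ≥ d(1, x) - 2 d(1, u)` by the triangle inequality through `u` and `u x`.
Hence `κ(hΛh⁻¹) ≥ κ(g₀Λg₀⁻¹) - 2 d(g₀, h)`, which exceeds `κ(g₀Λg₀⁻¹)/3` on the ball of radius
`κ(g₀Λg₀⁻¹)/3` around `g₀`. That this radius is positive follows from the continuity of
conjugation at `1`.
-/

/-- The quantitative discreteness constant of a subgroup. -/
noncomputable def kappa {G : Type*} [Group G] [MetricSpace G] (Λ : Subgroup G) : ℝ :=
  sInf {r : ℝ | ∃ g ∈ Λ, g ≠ 1 ∧ r = dist (1 : G) g}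

/-- The conjugate subgroup hΛh⁻¹. -/
def conjSubgroup {G : Type*} [Group G] (h : G) (Λ : Subgroup G) : Subgroup G :=
  Subgroup.map ((MulAut.conj h).toMonoidHom) Λ

section Group

variable {G : Type*} [Group G]

theorem mem_conjSubgroup {h q : G} {Λ : Subgroup G} :
    q ∈ conjSubgroup h Λ ↔ ∃ p ∈ Λ, h * p * h⁻¹ = q := by
  simp [conjSubgroup, MulAut.conj_apply]

theorem conjSubgroup_mul (a b : G) (Λ : Subgroup G) :
    conjSubgroup (a * b) Λ = conjSubgroup a (conjSubgroup b Λ) := by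
  simp only [conjSubgroup, map_mul, MulAut.mul_def, Subgroup.map_map]
  rfl

theorem exists_ne_one_conjSubgroup {Λ : Subgroup G} (hΛ : ∃ g ∈ Λ, g ≠ 1) (h : G) :
    ∃ q ∈ conjSubgroup h Λ, q ≠ 1 := by
  obtain ⟨p, hp, hp1⟩ := hΛ
  exact ⟨h * p * h⁻¹, mem_conjSubgroup.2 ⟨p, hp, rfl⟩, mt conj_eq_one_iff.1 hp1⟩

end Group

section Metric

variable {G : Type*} [Group G] [MetricSpace G]

theorem kappa_le_dist {Λ : Subgroup G} {g : G} (hg : g ∈ Λ) (hg1 : g ≠ 1) :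
    kappa Λ ≤ dist 1 g :=
  csInf_le ⟨0, by rintro r ⟨g, -, -, rfl⟩; exact dist_nonneg⟩ ⟨g, hg, hg1, rfl⟩

theorem le_kappa {Λ : Subgroup G} {r : ℝ} (hΛ : ∃ g ∈ Λ, g ≠ 1)
    (hr : ∀ g ∈ Λ, g ≠ 1 → r ≤ dist 1 g) : r ≤ kappa Λ := by
  obtain ⟨g, hg, hg1⟩ := hΛ
  refine le_csInf ⟨_, g, hg, hg1, rfl⟩ ?_
  rintro _ ⟨g, hg, hg1, rfl⟩
  exact hr g hg hg1

theorem exists_ne_one_of_kappa_pos {Λ : Subgroup G} (hκ : 0 < kappa Λ) : ∃ g ∈ Λ, g ≠ 1 := by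
  by_contra! htriv
  have hempty : {r : ℝ | ∃ g ∈ Λ, g ≠ 1 ∧ r = dist (1 : G) g} = ∅ :=
    Set.eq_empty_of_forall_notMem fun _ ⟨g, hg, hg1, _⟩ => hg1 (htriv g hg)
  rw [kappa, hempty, Real.sInf_empty] at hκ
  exact hκ.false

theorem kappa_conjSubgroup_pos [IsTopologicalGroup G] {Λ : Subgroup G} (hκ : 0 < kappa Λ)
    (h : G) : 0 < kappa (conjSubgroup h Λ) := by
  have hcont : ContinuousAt (fun q : G => h⁻¹ * q * h) 1 := by fun_prop
  obtain ⟨δ, hδ, hball⟩ := Metric.continuousAt_iff.1 hcont _ hκ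
  refine hδ.trans_le (le_kappa (exists_ne_one_conjSubgroup (exists_ne_one_of_kappa_pos hκ) h) ?_)
  rintro _ hq hq1
  obtain ⟨p, hp, rfl⟩ := mem_conjSubgroup.1 hq
  have hp1 : p ≠ 1 := mt conj_eq_one_iff.2 hq1
  by_contra! hclose
  have hfar := kappa_le_dist hp hp1
  have hunconj : h⁻¹ * (h * p * h⁻¹) * h = p := by group
  have := @hball (h * p * h⁻¹) (by rwa [dist_comm])
  rw [hunconj, mul_one, inv_mul_cancel, dist_comm] at this
  linarith

variable [IsIsometricSMul Gᵐᵒᵖ G]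

theorem dist_one_sub_two_mul_le_dist_one_conj (u x : G) :
    dist 1 x - 2 * dist 1 u ≤ dist 1 (u * x * u⁻¹) := by
  have hconj : dist 1 (u * x * u⁻¹) = dist u (u * x) := by
    simpa using (dist_mul_right 1 (u * x * u⁻¹) u).symm
  have hshift : dist (u * x) x = dist u 1 := by simpa using dist_mul_right u 1 x
  have := dist_triangle4 1 u (u * x) x
  rw [hshift, dist_comm u 1] at this
  linarith

theorem kappa_sub_two_mul_le_kappa_conjSubgroup {Λ : Subgroup G} (hΛ : ∃ g ∈ Λ, g ≠ 1)
    (u : G) : kappa Λ - 2 * dist 1 u ≤ kappa (conjSubgroup u Λ) := by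
  refine le_kappa (exists_ne_one_conjSubgroup hΛ u) ?_
  rintro _ hq hq1
  obtain ⟨p, hp, rfl⟩ := mem_conjSubgroup.1 hq
  have hp1 : p ≠ 1 := mt conj_eq_one_iff.2 hq1
  linarith [kappa_le_dist hp hp1, dist_one_sub_two_mul_le_dist_one_conj u p]

end Metric

theorem stmt_8_general {G : Type*} [Group G] [MetricSpace G] [IsTopologicalGroup G]
    (hright : ∀ a b c : G, dist (a * c) (b * c) = dist a b)
    (Λ : Subgroup G) (hκ : 0 < kappa Λ)
    (g₀ : G) :
    ∃ U ∈ nhds g₀, ∀ h ∈ U, kappa (conjSubgroup h Λ) > kappa (conjSubgroup g₀ Λ) / 3 := by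
  have : IsIsometricSMul Gᵐᵒᵖ G := ⟨fun c => Isometry.of_dist_eq fun a b => hright a b c.unop⟩
  set κ₀ := kappa (conjSubgroup g₀ Λ)
  have hκ₀ : 0 < κ₀ := kappa_conjSubgroup_pos hκ g₀
  refine ⟨Metric.ball g₀ (κ₀ / 3), Metric.ball_mem_nhds _ (by positivity), fun h hh => ?_⟩
  have hdist : dist 1 (h * g₀⁻¹) = dist g₀ h := by
    simpa using (dist_mul_right 1 (h * g₀⁻¹) g₀).symm
  have hbound := kappa_sub_two_mul_le_kappa_conjSubgroup
    (exists_ne_one_conjSubgroup (exists_ne_one_of_kappa_pos hκ) g₀) (h * g₀⁻¹)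
  rw [← conjSubgroup_mul, inv_mul_cancel_right, hdist] at hbound
  rw [Metric.mem_ball, dist_comm] at hh
  linarith

theorem stmt_8 {G : Type*} [Group G] [MetricSpace G] [IsTopologicalGroup G]
    (hright : ∀ a b c : G, dist (a * c) (b * c) = dist a b)
    (Λ : Subgroup G) (hκ : 0 < kappa Λ)
    (hLip : ∀ K : Set G, IsCompact K → ∀ g₀ : G, ∃ V ∈ nhds g₀, ∃ C > (0:ℝ),
      ∀ g ∈ V, ∀ p ∈ K, dist (g * p * g⁻¹) (g₀ * p * g₀⁻¹) ≤ C * dist g g₀)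
    (g₀ : G) :
    ∃ U ∈ nhds g₀, ∀ h ∈ U, kappa (conjSubgroup h Λ) > kappa (conjSubgroup g₀ Λ) / 3 :=
  stmt_8_general hright Λ hκ g₀
end

section
/- Let A be the linear map of ℝ² given by the diagonal matrix diag(λ₂/λ₁, λ₃/λ₁) with λ₁ > λ₂ > λ₃ > 0, and write ℓᵢ = log λᵢ. For a point p = (a, b) with a, b ≠ 0, there exist constants C₁, C₂ (depending on a, b, λᵢ) such that for all sufficiently large n, C₁ ≤ log ‖Aⁿp‖ − α⁻¹·log(distance of Aⁿp to the x-axis) ≤ C₂, where α = (ℓ₁ − ℓ₃)/(ℓ₁ − ℓ₂). -/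
/-!
Put `r = λ₂/λ₁` and `s = λ₃/λ₁`, so `0 < s < r`. Then `‖Aⁿp‖ = rⁿ (a² + (s/r)²ⁿ b²)^{1/2}` lies
between `rⁿ|a|` and `rⁿ (a² + b²)^{1/2}`, while `α⁻¹ log s = log r` turns
`α⁻¹ log (sⁿ|b|)` into `n log r + α⁻¹ log |b|`. The terms `n log r` cancel.
-/

open Real

section DiagonalOrbit

variable {r s : ℝ} (a b : ℝ) (n : ℕ)

lemma pow_mul_abs_le_sqrt :
    r ^ n * |a| ≤ √(r ^ (2 * n) * a ^ 2 + s ^ (2 * n) * b ^ 2) := by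
  apply Real.le_sqrt_of_sq_le
  have : 0 ≤ s ^ (2 * n) * b ^ 2 := by rw [pow_mul']; positivity
  calc (r ^ n * |a|) ^ 2 = r ^ (2 * n) * a ^ 2 := by rw [mul_pow, sq_abs, ← pow_mul']
    _ ≤ _ := le_add_of_nonneg_right this

lemma sqrt_le_pow_mul_sqrt (hs : 0 ≤ s) (hsr : s ≤ r) :
    √(r ^ (2 * n) * a ^ 2 + s ^ (2 * n) * b ^ 2) ≤ r ^ n * √(a ^ 2 + b ^ 2) := by
  have hr : 0 ≤ r := hs.trans hsr
  have hpow : s ^ (2 * n) ≤ r ^ (2 * n) := pow_le_pow_left₀ hs hsr _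
  rw [← Real.sqrt_sq (pow_nonneg hr n), ← Real.sqrt_mul (by positivity), ← pow_mul', mul_add]
  gcongr

lemma log_sqrt_orbit_bounds (hs : 0 < s) (hsr : s ≤ r) (ha : a ≠ 0) :
    n * log r + log |a| ≤ log √(r ^ (2 * n) * a ^ 2 + s ^ (2 * n) * b ^ 2) ∧
      log √(r ^ (2 * n) * a ^ 2 + s ^ (2 * n) * b ^ 2) ≤ n * log r + log √(a ^ 2 + b ^ 2) := by
  have hr : 0 < r := hs.trans_le hsr
  have hlower := pow_mul_abs_le_sqrt (r := r) (s := s) a b n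
  have hupper := sqrt_le_pow_mul_sqrt a b n hs.le hsr
  have hpos : 0 < r ^ n * |a| := by positivity
  have hab : 0 < √(a ^ 2 + b ^ 2) := Real.sqrt_pos.mpr (by positivity)
  constructor
  · calc n * log r + log |a| = log (r ^ n * |a|) := by
          rw [Real.log_mul (by positivity) (by positivity), Real.log_pow]
      _ ≤ _ := Real.log_le_log hpos hlower
  · calc _ ≤ log (r ^ n * √(a ^ 2 + b ^ 2)) := Real.log_le_log (hpos.trans_le hlower) hupper
      _ = n * log r + log √(a ^ 2 + b ^ 2) := by
          rw [Real.log_mul (by positivity) hab.ne', Real.log_pow]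

lemma mul_log_pow_mul_abs {c : ℝ} (hc : c * log s = log r) (hs : 0 < s) (hb : b ≠ 0) :
    c * log (s ^ n * |b|) = n * log r + c * log |b| := by
  rw [Real.log_mul (by positivity) (abs_ne_zero.mpr hb), Real.log_pow, ← hc]
  ring

end DiagonalOrbit

lemma inv_div_log_sub_mul_log_div {l₁ l₂ l₃ : ℝ} (h₁ : 0 < l₁) (h₂ : 0 < l₂) (h₃ : 0 < l₃)
    (h₁₃ : l₃ < l₁) :
    ((log l₁ - log l₃) / (log l₁ - log l₂))⁻¹ * log (l₃ / l₁) = log (l₂ / l₁) := by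
  have hlog : log l₁ - log l₃ ≠ 0 := sub_ne_zero.mpr (Real.log_lt_log h₃ h₁₃).ne'
  rw [inv_div, Real.log_div h₃.ne' h₁.ne', Real.log_div h₂.ne' h₁.ne']
  field_simp
  ring

theorem stmt_14 (lam1 lam2 lam3 : ℝ) (h12 : lam1 > lam2) (h23 : lam2 > lam3)
    (h3 : lam3 > 0) (a b : ℝ) (ha : a ≠ 0) (hb : b ≠ 0)
    (α : ℝ) (hα : α = (log lam1 - log lam3) / (log lam1 - log lam2)) :
    ∃ (C₁ C₂ : ℝ) (N : ℕ), ∀ n ≥ N,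
      C₁ ≤ log (Real.sqrt ((lam2 / lam1) ^ (2 * n) * a ^ 2 +
              (lam3 / lam1) ^ (2 * n) * b ^ 2))
            - α⁻¹ * log ((lam3 / lam1) ^ n * |b|) ∧
      log (Real.sqrt ((lam2 / lam1) ^ (2 * n) * a ^ 2 +
              (lam3 / lam1) ^ (2 * n) * b ^ 2))
            - α⁻¹ * log ((lam3 / lam1) ^ n * |b|) ≤ C₂ := by
  have h2 : 0 < lam2 := h3.trans h23
  have h1 : 0 < lam1 := h2.trans h12
  have hs : 0 < lam3 / lam1 := div_pos h3 h1
  have hsr : lam3 / lam1 ≤ lam2 / lam1 := by gcongr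
  have hαlog : α⁻¹ * log (lam3 / lam1) = log (lam2 / lam1) := by
    rw [hα]
    exact inv_div_log_sub_mul_log_div h1 h2 h3 (h23.trans h12)
  refine ⟨log |a| - α⁻¹ * log |b|, log √(a ^ 2 + b ^ 2) - α⁻¹ * log |b|, 0, fun n _ => ?_⟩
  rw [mul_log_pow_mul_abs b n hαlog hs hb]
  obtain ⟨hlower, hupper⟩ := log_sqrt_orbit_bounds a b n hs hsr ha
  constructor <;> linarith
end
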